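/- The function g(t) = (t²+1)·((t+1)·√(t²+1) − 2√2·t) / ((t²+t+1)·(t−1)²) is strictly increasing on the interval (1, ∞). -/

import Mathlib

/-!
Writing `R = (t + 1)(t⁴ + 4t² + 1)` and `Q = 2t⁴ + 5t³ + 10t² + 5t + 2`, a direct computation
gives `g'(t) = (2√2 R - √(t² + 1) Q) / ((t² + t + 1)² (t - 1)³)`.
For `t > 1` both `R` and `Q` are positive, so the sign of `g'` is that of `8R² - (t² + 1)Q²`,
which factors as `(t - 1)⁴` times a polynomial with positive coefficients.
-/

noncomputable def g (t : ℝ) : ℝ :=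
  (t ^ 2 + 1) * ((t + 1) * Real.sqrt (t ^ 2 + 1) - 2 * Real.sqrt 2 * t) /
    ((t ^ 2 + t + 1) * (t - 1) ^ 2)

open Real

noncomputable def gDeriv (t : ℝ) : ℝ :=
  (2 * √2 * ((t + 1) * (t ^ 4 + 4 * t ^ 2 + 1)) -
      √(t ^ 2 + 1) * (2 * t ^ 4 + 5 * t ^ 3 + 10 * t ^ 2 + 5 * t + 2)) /
    ((t ^ 2 + t + 1) ^ 2 * (t - 1) ^ 3)

lemma hasDerivAt_g {t : ℝ} (ht : 1 < t) : HasDerivAt g (gDeriv t) t := by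
  have hs : √(t ^ 2 + 1) ^ 2 = t ^ 2 + 1 := sq_sqrt (by positivity)
  have ht1 : t - 1 ≠ 0 := sub_ne_zero.2 ht.ne'
  have hsq : HasDerivAt (fun x => x ^ 2 + 1) (2 * t) t := by
    simpa using (hasDerivAt_pow 2 t).add_const 1
  have hnum : HasDerivAt (fun x => (x ^ 2 + 1) * ((x + 1) * √(x ^ 2 + 1) - 2 * √2 * x))
      (2 * t * ((t + 1) * √(t ^ 2 + 1) - 2 * √2 * t) +
        (t ^ 2 + 1) * (√(t ^ 2 + 1) - 2 * √2) + t * (t + 1) * √(t ^ 2 + 1)) t := by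
    refine (hsq.fun_mul
      ((((hasDerivAt_id' t).add_const 1).fun_mul (hsq.sqrt (by positivity))).fun_sub
        ((hasDerivAt_id' t).const_mul (2 * √2)))).congr_deriv ?_
    field_simp
    linear_combination -(t + 1) * t * hs
  have hden : HasDerivAt (fun x => (x ^ 2 + x + 1) * (x - 1) ^ 2)
      ((2 * t + 1) * (t - 1) ^ 2 + (t ^ 2 + t + 1) * (2 * (t - 1))) t :=
    (((hasDerivAt_pow 2 t).fun_add (hasDerivAt_id' t)).add_const 1).fun_mul
      (((hasDerivAt_id' t).sub_const 1).fun_pow 2) |>.congr_deriv (by ring)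
  refine (hnum.fun_div hden (by positivity)).congr_deriv ?_
  rw [gDeriv]
  field_simp
  ring

lemma eight_mul_sq_sub_mul_sq (t : ℝ) :
    8 * ((t + 1) * (t ^ 4 + 4 * t ^ 2 + 1)) ^ 2 -
      (t ^ 2 + 1) * (2 * t ^ 4 + 5 * t ^ 3 + 10 * t ^ 2 + 5 * t + 2) ^ 2 =
      (t - 1) ^ 4 *
        (4 * t ^ 6 + 12 * t ^ 5 + 27 * t ^ 4 + 40 * t ^ 3 + 27 * t ^ 2 + 12 * t + 4) := by
  ring

lemma sqrt_sq_add_one_mul_lt {t : ℝ} (ht : 1 < t) :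
    √(t ^ 2 + 1) * (2 * t ^ 4 + 5 * t ^ 3 + 10 * t ^ 2 + 5 * t + 2) <
      2 * √2 * ((t + 1) * (t ^ 4 + 4 * t ^ 2 + 1)) := by
  have ht0 : 0 < t := by linarith
  refine lt_of_pow_lt_pow_left₀ 2 (by positivity) ?_
  rw [mul_pow, mul_pow, mul_pow, sq_sqrt (by positivity), sq_sqrt zero_le_two]
  have hP : 0 < (t - 1) ^ 4 *
      (4 * t ^ 6 + 12 * t ^ 5 + 27 * t ^ 4 + 40 * t ^ 3 + 27 * t ^ 2 + 12 * t + 4) := by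
    have : t - 1 ≠ 0 := sub_ne_zero.2 ht.ne'
    positivity
  linarith [eight_mul_sq_sub_mul_sq t]

lemma gDeriv_pos {t : ℝ} (ht : 1 < t) : 0 < gDeriv t :=
  div_pos (sub_pos.2 (sqrt_sq_add_one_mul_lt ht)) (by have := sub_pos.2 ht; positivity)

theorem stmt_13 : StrictMonoOn g (Set.Ioi (1 : ℝ)) := by
  refine strictMonoOn_of_deriv_pos (convex_Ioi 1)
    (fun t ht => (hasDerivAt_g ht).continuousAt.continuousWithinAt) fun t ht => ?_
  rw [interior_Ioi] at ht
  rw [(hasDerivAt_g ht).deriv]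
  exact gDeriv_pos ht
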